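/- Let A be a strongly nilpotent left brace of cardinality p^4 for some prime p; that is, A^[k] = 0 for some natural number k. Then A^[6] = 0. -/
import Mathlib


/-- A left brace: `(A,+)` abelian group, `(A,∘)` a group, with
`a ∘ (b + c) + a = a ∘ b + a ∘ c`. -/
structure LeftBrace (A : Type) [AddCommGroup A] where
  circ : A → A → A
  one : A
  inv : A → A
  circ_assoc : ∀ a b c, circ (circ a b) c = circ a (circ b c)
  one_circ : ∀ a, circ one a = a
  circ_one : ∀ a, circ a one = a
  inv_circ : ∀ a, circ (inv a) a = one
  circ_add : ∀ a b c, circ a (b + c) + a = circ a b + circ a c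

namespace LeftBrace

variable {A : Type} [AddCommGroup A]

/-- `a * b = a ∘ b - a - b`. -/
def star (B : LeftBrace A) (a b : A) : A := B.circ a b - a - b

/-- `lchain B n = Aⁿ` for `n ≥ 1` (and `lchain B 0 = ⊤`): `A¹ = A`, and
`Aⁿ⁺¹` is the additive subgroup generated by `{a * b : a ∈ A, b ∈ Aⁿ}`. -/
def lchain (B : LeftBrace A) : ℕ → AddSubgroup A
  | 0 => ⊤
  | 1 => ⊤
  | n + 2 => AddSubgroup.closure {x | ∃ a : A, ∃ b ∈ B.lchain (n + 1), x = B.star a b}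

/-- `rchain B n = A⁽ⁿ⁾` for `n ≥ 1`: `A⁽¹⁾ = A`, and `A⁽ⁿ⁺¹⁾` is the additive
subgroup generated by `{a * b : a ∈ A⁽ⁿ⁾, b ∈ A}`. -/
def rchain (B : LeftBrace A) : ℕ → AddSubgroup A
  | 0 => ⊤
  | 1 => ⊤
  | n + 2 => AddSubgroup.closure {x | ∃ a ∈ B.rchain (n + 1), ∃ b : A, x = B.star a b}

/-- `schain B n = A^[n]` for `n ≥ 1`:  `A^[1] = A`, and
`A^[i+1] = Σ_{j=1}^{i} A^[j] * A^[i+1-j]` (additive subgroup generated by the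
corresponding products). -/
def schain (B : LeftBrace A) : ℕ → AddSubgroup A
  | 0 => ⊤
  | 1 => ⊤
  | n + 2 => AddSubgroup.closure
      {x | ∃ j : Fin (n + 1), ∃ u ∈ B.schain (j.1 + 1), ∃ v ∈ B.schain (n + 1 - j.1),
        x = B.star u v}

/-- An ideal of a left brace: an additive subgroup, normal in `(A,∘)`, and
invariant under all maps `λ_a(x) = a * x + x`. -/
structure IsIdeal (B : LeftBrace A) (I : AddSubgroup A) : Prop where
  lam_mem : ∀ a : A, ∀ x ∈ I, B.star a x + x ∈ I
  conj_mem : ∀ a : A, ∀ x ∈ I, B.circ (B.circ a x) (B.inv a) ∈ I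

/-- Left chain of an ideal: `ichainL B I n = Iⁿ⁺¹`, where `I¹ = I` and `Iⁱ⁺¹`
is the additive subgroup generated by `{a * b : a ∈ I, b ∈ Iⁱ}`. -/
def ichainL (B : LeftBrace A) (I : AddSubgroup A) : ℕ → AddSubgroup A
  | 0 => I
  | n + 1 => AddSubgroup.closure {x | ∃ a ∈ I, ∃ b ∈ B.ichainL I n, x = B.star a b}

/-- Right chain of an ideal: `ichainR B I n = I⁽ⁿ⁺¹⁾`, where `I⁽¹⁾ = I` and
`I⁽ⁱ⁺¹⁾` is the additive subgroup generated by `{a * b : a ∈ I⁽ⁱ⁾, b ∈ I}`. -/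
def ichainR (B : LeftBrace A) (I : AddSubgroup A) : ℕ → AddSubgroup A
  | 0 => I
  | n + 1 => AddSubgroup.closure {x | ∃ a ∈ B.ichainR I n, ∃ b ∈ I, x = B.star a b}

end LeftBrace

/- ======================================================================== -/
/- Auxiliary development for the proof of Statement 8.                      -/
/- ======================================================================== -/

namespace LeftBrace

variable {A : Type} [AddCommGroup A] (B : LeftBrace A)

/-! ### Basic identities -/

lemma circ_zero (a : A) : B.circ a 0 = a := by
  have h := B.circ_add a 0 0
  rw [add_zero] at h
  exact (add_left_cancel h).symm

lemma one_eq_zero : B.one = (0 : A) := by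
  have h1 : B.circ B.one 0 = (0 : A) := B.one_circ 0
  have h2 : B.circ B.one 0 = B.one := B.circ_zero B.one
  rw [h1] at h2; exact h2.symm

lemma zero_circ (a : A) : B.circ 0 a = a := by
  have := B.one_circ a
  rwa [B.one_eq_zero] at this

lemma circ_inv (a : A) : B.circ a (B.inv a) = B.one := by
  calc B.circ a (B.inv a)
      = B.circ (B.circ B.one a) (B.inv a) := by rw [B.one_circ]
    _ = B.circ (B.circ (B.circ (B.inv (B.inv a)) (B.inv a)) a) (B.inv a) := by
        rw [B.inv_circ (B.inv a)]
    _ = B.circ (B.circ (B.inv (B.inv a)) (B.circ (B.inv a) a)) (B.inv a) := by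
        rw [B.circ_assoc (B.inv (B.inv a)) (B.inv a) a]
    _ = B.circ (B.circ (B.inv (B.inv a)) B.one) (B.inv a) := by rw [B.inv_circ a]
    _ = B.circ (B.inv (B.inv a)) (B.circ B.one (B.inv a)) := by
        rw [B.circ_assoc]
    _ = B.circ (B.inv (B.inv a)) (B.inv a) := by rw [B.one_circ]
    _ = B.one := B.inv_circ (B.inv a)

lemma star_add (a b c : A) : B.star a (b + c) = B.star a b + B.star a c := by
  have h := B.circ_add a b c
  unfold star
  have : B.circ a (b + c) = B.circ a b + B.circ a c - a := by
    rw [← h]; abel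
  rw [this]; abel

/-- `star a ·` as an additive hom. -/
def starHom (a : A) : A →+ A := AddMonoidHom.mk' (B.star a) (B.star_add a)

@[simp] lemma starHom_apply (a b : A) : B.starHom a b = B.star a b := rfl

lemma star_zero (a : A) : B.star a 0 = 0 := (B.starHom a).map_zero

lemma star_neg (a b : A) : B.star a (-b) = -B.star a b := (B.starHom a).map_neg b

lemma star_sub (a b c : A) : B.star a (b - c) = B.star a b - B.star a c :=
  (B.starHom a).map_sub b c

lemma circ_eq (a b : A) : B.circ a b = a + b + B.star a b := by unfold star; abel

lemma zero_star (b : A) : B.star 0 b = 0 := by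
  unfold star; rw [B.zero_circ]; abel

lemma key (a b c : A) :
    B.star (B.circ a b) c = B.star a (B.star b c) + B.star a c + B.star b c := by
  have e1 : B.star a (B.star b c) = B.star a (B.circ b c) - B.star a b - B.star a c := by
    rw [show B.star b c = B.circ b c - b - c from rfl, B.star_sub, B.star_sub]
  rw [e1]
  show B.circ (B.circ a b) c - B.circ a b - c = _
  rw [B.circ_assoc]
  show _ = (B.circ a (B.circ b c) - a - B.circ b c) - (B.circ a b - a - b) -
      (B.circ a c - a - c) + (B.circ a c - a - c) + (B.circ b c - b - c)
  abel

/-- the lambda maps -/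
def lam (a x : A) : A := B.star a x + x

lemma lam_add (a x y : A) : B.lam a (x + y) = B.lam a x + B.lam a y := by
  unfold lam; rw [B.star_add]; abel

lemma lam_comp (a b x : A) : B.lam a (B.lam b x) = B.lam (B.circ a b) x := by
  unfold lam
  rw [B.star_add, B.key]
  abel

lemma lam_zero_left (x : A) : B.lam 0 x = x := by
  unfold lam; rw [B.zero_star]; abel

lemma circ_lam (a b : A) : B.circ a b = a + B.lam a b := by
  unfold lam; rw [B.circ_eq]; abel

lemma lam_inv_cancel (a x : A) : B.lam a (B.lam (B.inv a) x) = x := by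
  rw [B.lam_comp, B.circ_inv, B.one_eq_zero, B.lam_zero_left]

/-- the addition formula: `X + e = X ∘ (λ_{X⁻¹} e)`. -/
lemma add_eq_circ (X e : A) : X + e = B.circ X (B.lam (B.inv X) e) := by
  rw [B.circ_lam, B.lam_inv_cancel]

/-- The swap identity. -/
lemma swap (a b c : A) :
    B.star b (B.star a c)
      = B.star a (B.star b c)
        + B.star (B.circ a b) (B.star (B.lam (B.inv (B.circ a b)) (B.star b a - B.star a b)) c)
        + B.star (B.lam (B.inv (B.circ a b)) (B.star b a - B.star a b)) c := by
  set X := B.circ a b with hX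
  set e := B.star b a - B.star a b with he
  set z := B.lam (B.inv X) e with hz
  have h1 : B.star (B.circ b a) c = B.star b (B.star a c) + B.star b c + B.star a c := B.key b a c
  have h2 : B.circ b a = X + e := by
    rw [hX, he, B.circ_eq b a, B.circ_eq a b]; abel
  have h3 : X + e = B.circ X z := B.add_eq_circ X e
  have h4 : B.star (B.circ X z) c = B.star X (B.star z c) + B.star X c + B.star z c := B.key X z c
  have h5 : B.star X c = B.star a (B.star b c) + B.star a c + B.star b c := B.key a b c
  have h6 := h1
  rw [h2, h3, h4, h5] at h6
  have h7 : B.star b (B.star a c)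
      = (B.star X (B.star z c) + (B.star a (B.star b c) + B.star a c + B.star b c) + B.star z c)
        - B.star b c - B.star a c := by
    rw [h6]; abel
  rw [h7]; abel

/-! ### schain basics -/

lemma schain_zero : B.schain 0 = ⊤ := by unfold schain; rfl
lemma schain_one : B.schain 1 = ⊤ := by unfold schain; rfl
lemma mem_schain_one (x : A) : x ∈ B.schain 1 := by
  rw [B.schain_one]; exact AddSubgroup.mem_top x

lemma schain_succ_succ (n : ℕ) : B.schain (n+2) = AddSubgroup.closure
    {x | ∃ j : Fin (n + 1), ∃ u ∈ B.schain (j.1 + 1), ∃ v ∈ B.schain (n + 1 - j.1),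
      x = B.star u v} := by rw [schain]

lemma star_mem {i j : ℕ} (hi : 1 ≤ i) (hj : 1 ≤ j) {u v : A}
    (hu : u ∈ B.schain i) (hv : v ∈ B.schain j) : B.star u v ∈ B.schain (i + j) := by
  obtain ⟨m, hm⟩ : ∃ m, i + j = m + 2 := ⟨i + j - 2, by omega⟩
  rw [hm, B.schain_succ_succ]
  apply AddSubgroup.subset_closure
  refine ⟨⟨i - 1, by omega⟩, u, ?_, v, ?_, rfl⟩
  · have h1 : i - 1 + 1 = i := by omega
    rw [h1]; exact hu
  · have h2 : m + 1 - (i - 1) = j := by omega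
    rw [h2]; exact hv

lemma schain_succ_le : ∀ n : ℕ, B.schain (n+1) ≤ B.schain n := by
  intro n
  induction n using Nat.strong_induction_on with
  | _ n ih =>
    match n with
    | 0 => rw [B.schain_zero]; exact le_top
    | (m+1) =>
      rw [B.schain_succ_succ m]
      apply (AddSubgroup.closure_le _).2
      rintro x ⟨j, u, hu, v, hv, rfl⟩
      have hj := j.isLt
      by_cases hjm : j.1 < m
      · have hv' : v ∈ B.schain (m - j.1) := by
          have h3 := ih (m - j.1) (by omega)
          have he : m - j.1 + 1 = m + 1 - j.1 := by omega
          rw [he] at h3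
          exact h3 hv
        have h4 := B.star_mem (i := j.1+1) (j := m - j.1) (by omega) (by omega) hu hv'
        have he2 : j.1 + 1 + (m - j.1) = m + 1 := by omega
        rw [he2] at h4
        exact h4
      · -- j.1 = m
        have hjem : j.1 = m := by omega
        rcases Nat.eq_zero_or_pos m with hm0 | hmpos
        · subst hm0
          exact B.mem_schain_one _
        · have hu' : u ∈ B.schain m := by
            have h5 := ih m (by omega)
            rw [hjem] at hu
            exact h5 hu
          have hv' : v ∈ B.schain 1 := B.mem_schain_one v
          have h6 := B.star_mem (i := m) (j := 1) hmpos (by omega) hu' hv'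
          exact h6

lemma schain_le {i j : ℕ} (h : i ≤ j) : B.schain j ≤ B.schain i := by
  induction j with
  | zero => have : i = 0 := by omega
            subst this; exact le_rfl
  | succ n ihn =>
    rcases Nat.lt_or_ge i (n+1) with h1 | h2
    · exact (B.schain_succ_le n).trans (ihn (by omega))
    · have : i = n + 1 := by omega
      subst this; exact le_rfl

/-- membership in smaller schain level -/
lemma smem {i j t : ℕ} (hi : 1 ≤ i) (hj : 1 ≤ j) (ht : t ≤ i + j) {u v : A}
    (hu : u ∈ B.schain i) (hv : v ∈ B.schain j) : B.star u v ∈ B.schain t :=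
  B.schain_le ht (B.star_mem hi hj hu hv)

lemma lam_mem {r : ℕ} (hr : 1 ≤ r) (d : A) {e : A} (he : e ∈ B.schain r) :
    B.lam d e ∈ B.schain r := by
  unfold lam
  refine add_mem ?_ he
  have h1 := B.star_mem (i := 1) (j := r) le_rfl hr (B.mem_schain_one d) he
  exact B.schain_le (by omega) h1

/-! ### membership form of the swap identity -/

lemma swap_mem {dg dh dC dE T : ℕ}
    (hdg : 1 ≤ dg) (hdh : 1 ≤ dh) (hdC : 1 ≤ dC) (hdE : 1 ≤ dE)
    {g h u : A} (hg : g ∈ B.schain dg) (hh : h ∈ B.schain dh)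
    (hC : B.star u h ∈ B.schain dC)
    (hE : B.star u g - B.star g u ∈ B.schain dE)
    (hT1 : T ≤ dg + dC) (hT2 : T ≤ 1 + (dE + dh)) (hT3 : T ≤ dE + dh) :
    B.star u (B.star g h) ∈ B.schain T := by
  rw [B.swap g u h]
  have hz : B.lam (B.inv (B.circ g u)) (B.star u g - B.star g u) ∈ B.schain dE :=
    B.lam_mem hdE _ hE
  have hzh : B.star (B.lam (B.inv (B.circ g u)) (B.star u g - B.star g u)) h
      ∈ B.schain (dE + dh) := B.star_mem hdE hdh hz hh
  refine add_mem (add_mem ?_ ?_) ?_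
  · exact B.schain_le hT1 (B.star_mem hdg hdC hg hC)
  · exact B.smem (i := 1) (j := dE + dh) le_rfl (by omega) hT2
      (B.mem_schain_one _) hzh
  · exact B.schain_le hT3 hzh

/-! ### destructuring small schains -/

lemma schain_two_le {K : AddSubgroup A}
    (h : ∀ x y : A, B.star x y ∈ K) : B.schain 2 ≤ K := by
  rw [B.schain_succ_succ 0]
  apply (AddSubgroup.closure_le _).2
  rintro x ⟨j, u, hu, v, hv, rfl⟩
  exact h u v

lemma schain_three_le {K : AddSubgroup A}
    (h12 : ∀ x : A, ∀ c ∈ B.schain 2, B.star x c ∈ K)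
    (h21 : ∀ c ∈ B.schain 2, ∀ x : A, B.star c x ∈ K) : B.schain 3 ≤ K := by
  rw [B.schain_succ_succ 1]
  apply (AddSubgroup.closure_le _).2
  rintro x ⟨j, u, hu, v, hv, rfl⟩
  rcases j with ⟨jv, hjv⟩
  interval_cases jv
  · norm_num at hu hv
    exact h12 u v hv
  · norm_num at hu hv
    exact h21 u hu v

lemma schain_four_le {K : AddSubgroup A}
    (h13 : ∀ x : A, ∀ w ∈ B.schain 3, B.star x w ∈ K)
    (h22 : ∀ u ∈ B.schain 2, ∀ v ∈ B.schain 2, B.star u v ∈ K)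
    (h31 : ∀ w ∈ B.schain 3, ∀ x : A, B.star w x ∈ K) : B.schain 4 ≤ K := by
  rw [B.schain_succ_succ 2]
  apply (AddSubgroup.closure_le _).2
  rintro x ⟨j, u, hu, v, hv, rfl⟩
  rcases j with ⟨jv, hjv⟩
  interval_cases jv
  · norm_num at hu hv
    exact h13 u v hv
  · norm_num at hu hv
    exact h22 u hu v hv
  · norm_num at hu hv
    exact h31 u hu v

/-! ### the (2,2)-generator computation -/

lemma gen22_mem {du dC dE dZ T : ℕ} (hdu : 1 ≤ du)
    (hh3 : B.schain 3 ≤ B.schain 4)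
    (hup5 : B.schain 5 ≤ B.schain dZ) (hdZ : 1 ≤ dZ)
    (hupC : B.schain (du + 3) ≤ B.schain dC) (hdC : 1 ≤ dC)
    (hupE : B.schain (du + 1) ≤ B.schain dE) (hdE : 1 ≤ dE)
    (hT1 : T ≤ 1 + dC) (hT2 : T ≤ 1 + (dE + 3)) (hT3 : T ≤ dE + 3)
    (hT4 : T ≤ du + dZ) (hT5 : T ≤ du + (1 + dZ))
    {u u3 x y : A} (hu : u ∈ B.schain du) (hu3 : u3 ∈ B.schain 2) :
    B.star u (B.star u3 (B.star x y)) ∈ B.schain T := by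
  have hx1 : x ∈ B.schain 1 := B.mem_schain_one x
  have hy1 : y ∈ B.schain 1 := B.mem_schain_one y
  rw [B.swap x u3 y, B.star_add, B.star_add]
  have he1 : B.star u3 x - B.star x u3 ∈ B.schain 4 := by
    apply hh3
    exact sub_mem (B.smem (by omega) (by omega) (by omega) hu3 hx1)
      (B.smem (by omega) (by omega) (by omega) hx1 hu3)
  have hz1 : B.lam (B.inv (B.circ x u3)) (B.star u3 x - B.star x u3) ∈ B.schain 4 :=
    B.lam_mem (by omega) _ he1
  have hz1y : B.star (B.lam (B.inv (B.circ x u3)) (B.star u3 x - B.star x u3)) y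
      ∈ B.schain dZ := by
    apply hup5
    exact B.smem (by omega) (by omega) (by omega) hz1 hy1
  refine add_mem (add_mem ?_ ?_) ?_
  · -- u * (x * (u3 * y))
    have hW : B.star u3 y ∈ B.schain 3 := B.smem (by omega) (by omega) (by omega) hu3 hy1
    have hC : B.star u (B.star u3 y) ∈ B.schain dC := by
      apply hupC
      exact B.star_mem hdu (by omega) hu hW
    have hE : B.star u x - B.star x u ∈ B.schain dE := by
      apply hupE
      have h1 : B.star u x ∈ B.schain (du + 1) := B.star_mem hdu (by omega) hu hx1
      have h2 : B.star x u ∈ B.schain (du + 1) := by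
        have := B.star_mem (by omega : (1:ℕ) ≤ 1) hdu hx1 hu
        rwa [show 1 + du = du + 1 by omega] at this
      exact sub_mem h1 h2
    exact B.swap_mem (dg := 1) (dh := 3) (dC := dC) (dE := dE) (by omega) (by omega)
      hdC hdE hx1 hW hC hE hT1 hT2 hT3
  · -- u * ((x∘u3) * (z1 * y))
    have h1 : B.star (B.circ x u3) (B.star (B.lam (B.inv (B.circ x u3))
        (B.star u3 x - B.star x u3)) y) ∈ B.schain (1 + dZ) :=
      B.star_mem (by omega) hdZ (B.mem_schain_one _) hz1y
    exact B.smem hdu (by omega) hT5 hu h1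
  · -- u * (z1 * y)
    exact B.smem hdu hdZ hT4 hu hz1y

/-! ### the four hard product bounds -/

lemma auxB7 (h5 : B.schain 5 = B.schain 6) :
    ∀ u ∈ B.schain 4, ∀ v ∈ B.schain 2, B.star u v ∈ B.schain 7 := by
  intro u hu v hv
  have hle : B.schain 2 ≤ (B.schain 7).comap (B.starHom u) := by
    apply B.schain_two_le
    intro x y
    rw [AddSubgroup.mem_comap, B.starHom_apply]
    have hC : B.star u y ∈ B.schain 6 := by
      rw [← h5]
      exact B.smem (by omega) (by omega) (by omega) hu (B.mem_schain_one y)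
    have hE : B.star u x - B.star x u ∈ B.schain 6 := by
      rw [← h5]
      exact sub_mem (B.smem (by omega) (by omega) (by omega) hu (B.mem_schain_one x))
        (B.smem (by omega) (by omega) (by omega) (B.mem_schain_one x) hu)
    exact B.swap_mem (dg := 1) (dh := 1) (dC := 6) (dE := 6) (by omega) (by omega)
      (by omega) (by omega) (B.mem_schain_one x) (B.mem_schain_one y) hC hE
      (by omega) (by omega) (by omega)
  exact (AddSubgroup.mem_comap).1 (hle hv)

lemma auxC7 (h4 : B.schain 4 = B.schain 5) (h5 : B.schain 5 = B.schain 6) :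
    ∀ u ∈ B.schain 3, ∀ v ∈ B.schain 3, B.star u v ∈ B.schain 7 := by
  intro u hu v hv
  have h46 : B.schain 4 = B.schain 6 := h4.trans h5
  have hle : B.schain 3 ≤ (B.schain 7).comap (B.starHom u) := by
    apply B.schain_three_le
    · intro x c hc
      rw [AddSubgroup.mem_comap, B.starHom_apply]
      have hC : B.star u c ∈ B.schain 6 := by
        rw [← h5]
        exact B.smem (by omega) (by omega) (by omega) hu hc
      have hE : B.star u x - B.star x u ∈ B.schain 6 := by
        rw [← h46]
        exact sub_mem (B.smem (by omega) (by omega) (by omega) hu (B.mem_schain_one x))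
          (B.smem (by omega) (by omega) (by omega) (B.mem_schain_one x) hu)
      exact B.swap_mem (dg := 1) (dh := 2) (dC := 6) (dE := 6) (by omega) (by omega)
        (by omega) (by omega) (B.mem_schain_one x) hc hC hE
        (by omega) (by omega) (by omega)
    · intro c hc x
      rw [AddSubgroup.mem_comap, B.starHom_apply]
      have hC : B.star u x ∈ B.schain 6 := by
        rw [← h46]
        exact B.smem (by omega) (by omega) (by omega) hu (B.mem_schain_one x)
      have hE : B.star u c - B.star c u ∈ B.schain 6 := by
        rw [← h5]
        exact sub_mem (B.smem (by omega) (by omega) (by omega) hu hc)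
          (B.smem (by omega) (by omega) (by omega) hc hu)
      exact B.swap_mem (dg := 2) (dh := 1) (dC := 6) (dE := 6) (by omega) (by omega)
        (by omega) (by omega) hc (B.mem_schain_one x) hC hE
        (by omega) (by omega) (by omega)
  exact (AddSubgroup.mem_comap).1 (hle hv)

lemma auxA7 (h3 : B.schain 3 = B.schain 4) (h5 : B.schain 5 = B.schain 6) :
    ∀ u ∈ B.schain 2, ∀ v ∈ B.schain 4, B.star u v ∈ B.schain 7 := by
  intro u hu v hv
  have hle : B.schain 4 ≤ (B.schain 7).comap (B.starHom u) := by
    apply B.schain_four_le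
    · intro x w hw
      rw [AddSubgroup.mem_comap, B.starHom_apply]
      have hw4 : w ∈ B.schain 4 := h3 ▸ hw
      have h1 : B.star x w ∈ B.schain 5 :=
        B.star_mem (by omega) (by omega) (B.mem_schain_one x) hw4
      exact B.smem (by omega) (by omega) (by omega) hu h1
    · intro u3 hu3 c3 hc3
      rw [AddSubgroup.mem_comap, B.starHom_apply]
      have hle2 : B.schain 2 ≤ (B.schain 7).comap ((B.starHom u).comp (B.starHom u3)) := by
        apply B.schain_two_le
        intro x y
        rw [AddSubgroup.mem_comap]
        show B.star u (B.star u3 (B.star x y)) ∈ B.schain 7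
        exact B.gen22_mem (du := 2) (dC := 6) (dE := 4) (dZ := 6) (T := 7)
          (by omega) (le_of_eq h3) (le_of_eq h5) (by omega) (le_of_eq h5) (by omega)
          (le_of_eq h3) (by omega) (by omega) (by omega) (by omega) (by omega) (by omega)
          hu hu3
      have h2 := (AddSubgroup.mem_comap).1 (hle2 hc3)
      exact h2
    · intro w hw x
      rw [AddSubgroup.mem_comap, B.starHom_apply]
      have hw4 : w ∈ B.schain 4 := h3 ▸ hw
      have h1 : B.star w x ∈ B.schain 5 :=
        B.star_mem (by omega) (by omega) hw4 (B.mem_schain_one x)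
      exact B.smem (by omega) (by omega) (by omega) hu h1
  exact (AddSubgroup.mem_comap).1 (hle hv)

lemma auxD9 (h3 : B.schain 3 = B.schain 4) (h58 : B.schain 5 = B.schain 8) :
    ∀ u ∈ B.schain 4, ∀ v ∈ B.schain 4, B.star u v ∈ B.schain 9 := by
  intro u hu v hv
  have h78 : B.schain 7 ≤ B.schain 8 := by
    calc B.schain 7 ≤ B.schain 5 := B.schain_le (by omega)
    _ = B.schain 8 := h58
  have hle : B.schain 4 ≤ (B.schain 9).comap (B.starHom u) := by
    apply B.schain_four_le
    · intro x w hw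
      rw [AddSubgroup.mem_comap, B.starHom_apply]
      have hw4 : w ∈ B.schain 4 := h3 ▸ hw
      have h1 : B.star x w ∈ B.schain 8 := by
        rw [← h58]
        exact B.star_mem (by omega) (by omega) (B.mem_schain_one x) hw4
      exact B.smem (by omega) (by omega) (by omega) hu h1
    · intro u3 hu3 c3 hc3
      rw [AddSubgroup.mem_comap, B.starHom_apply]
      have hle2 : B.schain 2 ≤ (B.schain 9).comap ((B.starHom u).comp (B.starHom u3)) := by
        apply B.schain_two_le
        intro x y
        rw [AddSubgroup.mem_comap]
        show B.star u (B.star u3 (B.star x y)) ∈ B.schain 9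
        exact B.gen22_mem (du := 4) (dC := 8) (dE := 8) (dZ := 8) (T := 9)
          (by omega) (le_of_eq h3) (le_of_eq h58) (by omega) h78 (by omega)
          (le_of_eq h58) (by omega) (by omega) (by omega) (by omega) (by omega) (by omega)
          hu hu3
      exact (AddSubgroup.mem_comap).1 (hle2 hc3)
    · intro w hw x
      rw [AddSubgroup.mem_comap, B.starHom_apply]
      have hw4 : w ∈ B.schain 4 := h3 ▸ hw
      have h1 : B.star w x ∈ B.schain 8 := by
        rw [← h58]
        exact B.star_mem (by omega) (by omega) hw4 (B.mem_schain_one x)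
      exact B.smem (by omega) (by omega) (by omega) hu h1
  exact (AddSubgroup.mem_comap).1 (hle hv)


/-! ### propagation step -/

lemma step (m : ℕ)
    (h : ∀ a b : ℕ, a + b = m + 2 → 1 ≤ a → 1 ≤ b →
      ∀ u ∈ B.schain a, ∀ v ∈ B.schain b, B.star u v ∈ B.schain (m + 3)) :
    B.schain (m + 2) ≤ B.schain (m + 3) := by
  rw [B.schain_succ_succ m]
  apply (AddSubgroup.closure_le _).2
  rintro x ⟨j, u, hu, v, hv, rfl⟩
  have hj := j.isLt
  exact h (j.1+1) (m+1-j.1) (by omega) (by omega) (by omega) u hu v hv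

/-! ### stall propagation lemmas -/

lemma stall_one (h1 : B.schain 1 = B.schain 2) : ∀ n, B.schain 1 ≤ B.schain n := by
  intro n
  induction n using Nat.strong_induction_on with
  | _ n ih =>
    match n with
    | 0 => rw [B.schain_zero]; exact le_top
    | 1 => exact le_rfl
    | 2 => exact le_of_eq h1
    | (m+3) =>
      have heq : ∀ j, 1 ≤ j → j ≤ m + 2 → B.schain j = B.schain 1 :=
        fun j hj1 hj2 => le_antisymm (B.schain_le hj1) (ih j (by omega))
      have hstep : B.schain (m+2) ≤ B.schain (m+3) := by
        apply B.step
        intro a b hab ha hb u hu v hv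
        have hu' : u ∈ B.schain (a+1) := by
          have e1 : B.schain a = B.schain 1 := heq a ha (by omega)
          have e2 : B.schain (a+1) = B.schain 1 := heq (a+1) (by omega) (by omega)
          rw [e1] at hu; rw [e2]; exact hu
        have h2 := B.star_mem (i := a+1) (j := b) (by omega) hb hu' hv
        have he : a + 1 + b = m + 3 := by omega
        rwa [he] at h2
      exact (ih (m+2) (by omega)).trans hstep

lemma stall_two (h2 : B.schain 2 = B.schain 3) : ∀ n, B.schain 2 ≤ B.schain n := by
  intro n
  induction n using Nat.strong_induction_on with
  | _ n ih =>
    match n with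
    | 0 => rw [B.schain_zero]; exact le_top
    | 1 => rw [B.schain_one]; exact le_top
    | 2 => exact le_rfl
    | 3 => exact le_of_eq h2
    | (m+4) =>
      have heq : ∀ j, 2 ≤ j → j ≤ m + 3 → B.schain j = B.schain 2 :=
        fun j hj1 hj2 => le_antisymm (B.schain_le hj1) (ih j (by omega))
      have hstep : B.schain (m+3) ≤ B.schain (m+4) := by
        apply B.step (m := m+1)
        intro a b hab ha hb u hu v hv
        rcases Nat.lt_or_ge a 2 with ha2 | ha2
        · -- a = 1, so b = m+2 ≥ 2
          have hv' : v ∈ B.schain (b+1) := by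
            have e1 : B.schain b = B.schain 2 := heq b (by omega) (by omega)
            have e2 : B.schain (b+1) = B.schain 2 := heq (b+1) (by omega) (by omega)
            rw [e1] at hv; rw [e2]; exact hv
          have h3 := B.star_mem (i := a) (j := b+1) ha (by omega) hu hv'
          have he : a + (b + 1) = m + 4 := by omega
          rwa [he] at h3
        · have hu' : u ∈ B.schain (a+1) := by
            have e1 : B.schain a = B.schain 2 := heq a ha2 (by omega)
            have e2 : B.schain (a+1) = B.schain 2 := heq (a+1) (by omega) (by omega)
            rw [e1] at hu; rw [e2]; exact hu
          have h3 := B.star_mem (i := a+1) (j := b) (by omega) hb hu' hv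
          have he : a + 1 + b = m + 4 := by omega
          rwa [he] at h3
      exact (ih (m+3) (by omega)).trans hstep

lemma stall_34 (h3 : B.schain 3 = B.schain 4) (h4 : B.schain 4 = B.schain 5) :
    ∀ n, B.schain 3 ≤ B.schain n := by
  intro n
  induction n using Nat.strong_induction_on with
  | _ n ih =>
    match n with
    | 0 => rw [B.schain_zero]; exact le_top
    | 1 => rw [B.schain_one]; exact le_top
    | 2 => exact B.schain_le (by omega)
    | 3 => exact le_rfl
    | 4 => exact le_of_eq h3
    | 5 => exact le_of_eq (h3.trans h4)
    | (m+6) =>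
      have heq : ∀ j, 3 ≤ j → j ≤ m + 5 → B.schain j = B.schain 3 :=
        fun j hj1 hj2 => le_antisymm (B.schain_le hj1) (ih j (by omega))
      have hstep : B.schain (m+5) ≤ B.schain (m+6) := by
        apply B.step (m := m+3)
        intro a b hab ha hb u hu v hv
        rcases Nat.lt_or_ge a 3 with ha3 | ha3
        · -- a ≤ 2, so b = m+5-a ≥ m+3 ≥ 3
          have hv' : v ∈ B.schain (b+1) := by
            have e1 : B.schain b = B.schain 3 := heq b (by omega) (by omega)
            have e2 : B.schain (b+1) = B.schain 3 := heq (b+1) (by omega) (by omega)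
            rw [e1] at hv; rw [e2]; exact hv
          have h5 := B.star_mem (i := a) (j := b+1) ha (by omega) hu hv'
          have he : a + (b + 1) = m + 6 := by omega
          rwa [he] at h5
        · have hu' : u ∈ B.schain (a+1) := by
            have e1 : B.schain a = B.schain 3 := heq a ha3 (by omega)
            have e2 : B.schain (a+1) = B.schain 3 := heq (a+1) (by omega) (by omega)
            rw [e1] at hu; rw [e2]; exact hu
          have h5 := B.star_mem (i := a+1) (j := b) (by omega) hb hu' hv
          have he : a + 1 + b = m + 6 := by omega
          rwa [he] at h5
      exact (ih (m+5) (by omega)).trans hstep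

lemma stall_45 (h4 : B.schain 4 = B.schain 5) (h5 : B.schain 5 = B.schain 6) :
    ∀ n, B.schain 4 ≤ B.schain n := by
  intro n
  induction n using Nat.strong_induction_on with
  | _ n ih =>
    match n with
    | 0 => rw [B.schain_zero]; exact le_top
    | 1 => rw [B.schain_one]; exact le_top
    | 2 => exact B.schain_le (by omega)
    | 3 => exact B.schain_le (by omega)
    | 4 => exact le_rfl
    | 5 => exact le_of_eq h4
    | 6 => exact le_of_eq (h4.trans h5)
    | (m+7) =>
      have heq : ∀ j, 4 ≤ j → j ≤ m + 6 → B.schain j = B.schain 4 :=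
        fun j hj1 hj2 => le_antisymm (B.schain_le hj1) (ih j (by omega))
      have hstep : B.schain (m+6) ≤ B.schain (m+7) := by
        apply B.step (m := m+4)
        intro a b hab ha hb u hu v hv
        rcases Nat.lt_or_ge a 4 with ha4 | ha4
        · rcases Nat.lt_or_ge b 4 with hb4 | hb4
          · -- both ≤ 3: sum ≤ 6, so m = 0 and a = b = 3
            have hm : m = 0 ∧ a = 3 ∧ b = 3 := by omega
            obtain ⟨hm0, ha', hb'⟩ := hm
            subst hm0; subst ha'; subst hb'
            exact B.auxC7 h4 h5 u hu v hv
          · -- b ≥ 4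
            have hv' : v ∈ B.schain (b+1) := by
              have e1 : B.schain b = B.schain 4 := heq b hb4 (by omega)
              have e2 : B.schain (b+1) = B.schain 4 := heq (b+1) (by omega) (by omega)
              rw [e1] at hv; rw [e2]; exact hv
            have h6 := B.star_mem (i := a) (j := b+1) ha (by omega) hu hv'
            have he : a + (b + 1) = m + 7 := by omega
            rwa [he] at h6
        · have hu' : u ∈ B.schain (a+1) := by
            have e1 : B.schain a = B.schain 4 := heq a ha4 (by omega)
            have e2 : B.schain (a+1) = B.schain 4 := heq (a+1) (by omega) (by omega)
            rw [e1] at hu; rw [e2]; exact hu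
          have h6 := B.star_mem (i := a+1) (j := b) (by omega) hb hu' hv
          have he : a + 1 + b = m + 7 := by omega
          rwa [he] at h6
      exact (ih (m+6) (by omega)).trans hstep

lemma stall_35 (h3 : B.schain 3 = B.schain 4) (h5 : B.schain 5 = B.schain 6) :
    ∀ n, B.schain 5 ≤ B.schain n := by
  intro n
  induction n using Nat.strong_induction_on with
  | _ n ih =>
    match n with
    | 0 => rw [B.schain_zero]; exact le_top
    | 1 => rw [B.schain_one]; exact le_top
    | 2 => exact B.schain_le (by omega)
    | 3 => exact B.schain_le (by omega)
    | 4 => exact B.schain_le (by omega)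
    | 5 => exact le_rfl
    | 6 => exact le_of_eq h5
    | (m+7) =>
      have heq : ∀ j, 5 ≤ j → j ≤ m + 6 → B.schain j = B.schain 5 :=
        fun j hj1 hj2 => le_antisymm (B.schain_le hj1) (ih j (by omega))
      have hstep : B.schain (m+6) ≤ B.schain (m+7) := by
        apply B.step (m := m+4)
        intro a b hab ha hb u hu v hv
        rcases Nat.lt_or_ge a 5 with ha5 | ha5
        · rcases Nat.lt_or_ge b 5 with hb5 | hb5
          · -- both ≤ 4: sum ≤ 8, so m ≤ 2
            have hm : m ≤ 2 := by omega
            -- enumerate the possibilities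
            rcases (by omega : m = 0 ∧ a + b = 6 ∨ m = 1 ∧ a + b = 7 ∨ m = 2 ∧ a + b = 8)
              with ⟨hm0, hab'⟩ | ⟨hm1, hab'⟩ | ⟨hm2, hab'⟩
            · subst hm0
              -- a+b = 6, 2 ≤ a,b ≤ 4 : (2,4),(3,3),(4,2)
              rcases (by omega : a = 2 ∧ b = 4 ∨ a = 3 ∧ b = 3 ∨ a = 4 ∧ b = 2)
                with ⟨ha', hb'⟩ | ⟨ha', hb'⟩ | ⟨ha', hb'⟩
              · subst ha'; subst hb'
                exact B.auxA7 h3 h5 u hu v hv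
              · subst ha'; subst hb'
                have hu' : u ∈ B.schain 4 := h3 ▸ hu
                exact B.smem (by omega) (by omega) (by omega) hu' hv
              · subst ha'; subst hb'
                exact B.auxB7 h5 u hu v hv
            · subst hm1
              -- a+b = 7, 3 ≤ a,b ≤ 4 : (3,4),(4,3)
              rcases (by omega : a = 3 ∧ b = 4 ∨ a = 4 ∧ b = 3)
                with ⟨ha', hb'⟩ | ⟨ha', hb'⟩
              · subst ha'; subst hb'
                have hu' : u ∈ B.schain 4 := h3 ▸ hu
                exact B.smem (by omega) (by omega) (by omega) hu' hv
              · subst ha'; subst hb'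
                have hv' : v ∈ B.schain 4 := h3 ▸ hv
                exact B.smem (by omega) (by omega) (by omega) hu hv'
            · subst hm2
              -- a+b = 8, a = b = 4
              rcases (by omega : a = 4 ∧ b = 4) with ⟨ha', hb'⟩
              subst ha'; subst hb'
              have h58 : B.schain 5 = B.schain 8 := heq 8 (by omega) (by omega) |>.symm ▸ rfl
              exact B.auxD9 h3 ((heq 8 (by omega) (by omega)).symm) u hu v hv
          · -- b ≥ 5
            have hv' : v ∈ B.schain (b+1) := by
              have e1 : B.schain b = B.schain 5 := heq b hb5 (by omega)
              have e2 : B.schain (b+1) = B.schain 5 := heq (b+1) (by omega) (by omega)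
              rw [e1] at hv; rw [e2]; exact hv
            have h6 := B.star_mem (i := a) (j := b+1) ha (by omega) hu hv'
            have he : a + (b + 1) = m + 7 := by omega
            rwa [he] at h6
        · have hu' : u ∈ B.schain (a+1) := by
            have e1 : B.schain a = B.schain 5 := heq a ha5 (by omega)
            have e2 : B.schain (a+1) = B.schain 5 := heq (a+1) (by omega) (by omega)
            rw [e1] at hu; rw [e2]; exact hu
          have h6 := B.star_mem (i := a+1) (j := b) (by omega) hb hu' hv
          have he : a + 1 + b = m + 7 := by omega
          rwa [he] at h6
      exact (ih (m+6) (by omega)).trans hstep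

end LeftBrace

/-- a strongly nilpotent left brace of cardinality `p^4` (i.e. with
`A^[k] = 0` for some `k`) satisfies `A^[6] = 0`. -/
theorem stronglyNilpotent_card_pow_four_schain_six {A : Type} [AddCommGroup A]
    {p : ℕ} (hp : p.Prime) (B : LeftBrace A) (hcard : Nat.card A = p ^ 4)
    (k : ℕ) (hk : B.schain k = ⊥) :
    B.schain 6 = ⊥ := by
  by_contra h6
  have hp2 : 2 ≤ p := hp.two_le
  have hfin : Finite A := by
    apply Nat.finite_of_card_ne_zero
    rw [hcard]
    positivity
  have hkill : ∀ n1 : ℕ, n1 ≤ 6 → (∀ n, B.schain n1 ≤ B.schain n) → False := by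
    intro n1 hn1 hall
    apply h6
    have h1 : B.schain 6 ≤ B.schain n1 := B.schain_le hn1
    have h2 : B.schain n1 ≤ ⊥ := le_of_le_of_eq (hall k) hk
    exact le_bot_iff.1 (h1.trans h2)
  -- exponents
  have hd : ∀ n : ℕ, 1 ≤ n → ∃ e, e ≤ 4 ∧ Nat.card (B.schain n) = p ^ e := by
    intro n hn
    have h1 : Nat.card (B.schain n) ∣ Nat.card (B.schain 1) :=
      AddSubgroup.card_dvd_of_le (B.schain_le hn)
    rw [B.schain_one, AddSubgroup.card_top, hcard] at h1
    exact (Nat.dvd_prime_pow hp).1 h1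
  obtain ⟨e1, he1le, he1⟩ := hd 1 (by omega)
  obtain ⟨e2, he2le, he2⟩ := hd 2 (by omega)
  obtain ⟨e3, he3le, he3⟩ := hd 3 (by omega)
  obtain ⟨e4, he4le, he4⟩ := hd 4 (by omega)
  obtain ⟨e5, he5le, he5⟩ := hd 5 (by omega)
  obtain ⟨e6, he6le, he6⟩ := hd 6 (by omega)
  have he1four : e1 = 4 := by
    apply Nat.pow_right_injective hp2
    show p ^ e1 = p ^ 4
    rw [← he1, B.schain_one, AddSubgroup.card_top, hcard]
  have hgap : ∀ n en en1, Nat.card (B.schain n) = p ^ en →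
      Nat.card (B.schain (n+1)) = p ^ en1 →
      B.schain n ≠ B.schain (n+1) → en1 < en := by
    intro n en en1 hen hen1 hne
    have hle : Nat.card (B.schain (n+1)) ≤ Nat.card (B.schain n) :=
      AddSubgroup.card_le_of_le (B.schain_succ_le n)
    have hnec : Nat.card (B.schain (n+1)) ≠ Nat.card (B.schain n) := by
      intro hEqc
      exact hne (AddSubgroup.eq_of_le_of_card_ge (B.schain_succ_le n) (le_of_eq hEqc.symm)).symm
    have hlt : p ^ en1 < p ^ en := by
      rw [← hen, ← hen1]; omega
    exact (Nat.pow_lt_pow_iff_right hp.one_lt).1 hlt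
  have he6pos : 1 ≤ e6 := by
    have h1 : 1 < Nat.card (B.schain 6) := (AddSubgroup.one_lt_card_iff_ne_bot _).2 h6
    rw [he6] at h1
    by_contra hcon
    have : e6 = 0 := by omega
    rw [this, pow_zero] at h1
    omega
  by_cases s1 : B.schain 1 = B.schain 2
  · exact hkill 1 (by omega) (B.stall_one s1)
  have g1 : e2 < e1 := hgap 1 e1 e2 he1 he2 s1
  by_cases s2 : B.schain 2 = B.schain 3
  · exact hkill 2 (by omega) (B.stall_two s2)
  have g2 : e3 < e2 := hgap 2 e2 e3 he2 he3 s2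
  by_cases s3 : B.schain 3 = B.schain 4
  · by_cases s4 : B.schain 4 = B.schain 5
    · exact hkill 3 (by omega) (B.stall_34 s3 s4)
    by_cases s5 : B.schain 5 = B.schain 6
    · exact hkill 5 (by omega) (B.stall_35 s3 s5)
    · have g4 : e5 < e4 := hgap 4 e4 e5 he4 he5 s4
      have g5 : e6 < e5 := hgap 5 e5 e6 he5 he6 s5
      have hm3 : e4 ≤ e3 := by
        have hle : Nat.card (B.schain 4) ≤ Nat.card (B.schain 3) :=
          AddSubgroup.card_le_of_le (B.schain_succ_le 3)
        rw [he3, he4] at hle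
        exact (Nat.pow_le_pow_iff_right hp.one_lt).1 hle
      omega
  · have g3 : e4 < e3 := hgap 3 e3 e4 he3 he4 s3
    by_cases s4 : B.schain 4 = B.schain 5
    · by_cases s5 : B.schain 5 = B.schain 6
      · exact hkill 4 (by omega) (B.stall_45 s4 s5)
      · have g5 : e6 < e5 := hgap 5 e5 e6 he5 he6 s5
        have hm4 : e5 ≤ e4 := by
          have hle : Nat.card (B.schain 5) ≤ Nat.card (B.schain 4) :=
            AddSubgroup.card_le_of_le (B.schain_succ_le 4)
          rw [he4, he5] at hle
          exact (Nat.pow_le_pow_iff_right hp.one_lt).1 hle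
        omega
    · have g4 : e5 < e4 := hgap 4 e4 e5 he4 he5 s4
      have hm5 : e6 ≤ e5 := by
        have hle : Nat.card (B.schain 6) ≤ Nat.card (B.schain 5) :=
          AddSubgroup.card_le_of_le (B.schain_succ_le 5)
        rw [he5, he6] at hle
        exact (Nat.pow_le_pow_iff_right hp.one_lt).1 hle
      omega
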